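/- arXiv:math/9411221 — 2 statements merged into one kernel-verified Lean document; each statement's English description precedes it below -/
import Mathlib

section
/- Let 𝒢 = 𝒢(G,H,S) be a strongly connected, hierarchical Cayley coset digraph whose generators are distinct double-coset representatives, with the generators ordered as s₁,…,s_k (k ≥ 2) so that the subgroups G_i = ⟨H ∪ {s₁,…,s_i}⟩ are pairwise distinct. Let d_i = d_{s₁} + … + d_{s_i}. Suppose d_{s_{i+1}} ≤ d_i for each i < k, and Hs₁⁻¹H ≠ Hs₁H. Then κ(𝒢) = d(𝒢) = Σ_{s∈S} d_s. -/
open Classical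

/-- A digraph (given by its edge relation `E`) is strongly connected iff for every
ordered pair of vertices there is a directed path from the first to the second. -/
def SC {V : Type*} (E : V → V → Prop) : Prop :=
  ∀ a b : V, Relation.ReflTransGen E a b

/-- The subdigraph induced on `A` is strongly connected. -/
def SCOn {V : Type*} (E : V → V → Prop) (A : Set V) : Prop :=
  ∀ a ∈ A, ∀ b ∈ A, Relation.ReflTransGen (fun x y => x ∈ A ∧ y ∈ A ∧ E x y) a b

/-- Out-neighborhood of a set of vertices. -/
def Nout {V : Type*} (E : V → V → Prop) (A : Set V) : Set V :=
  {x | x ∉ A ∧ ∃ y ∈ A, E y x}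

/-- Vertex connectivity: the least cardinality of a set `T` of vertices whose removal
leaves a non-strongly-connected digraph; `Nat.card V - 1` if no such `T` exists. -/
noncomputable def kappa {V : Type*} [Finite V] (E : V → V → Prop) : ℕ :=
  if ∃ T : Set V, ¬ SCOn E Tᶜ then
    sInf {m | ∃ T : Set V, T.ncard = m ∧ ¬ SCOn E Tᶜ}
  else Nat.card V - 1

/-- A part of a digraph. -/
def IsPart {V : Type*} (E : V → V → Prop) (A : Set V) : Prop :=
  A.Nonempty ∧ ((A ∪ Nout E A)ᶜ : Set V).Nonempty

/-- An atom: a part with `|N(A)| = κ` of minimum cardinality among such parts. -/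
def IsAtomD {V : Type*} [Finite V] (E : V → V → Prop) (A : Set V) : Prop :=
  IsPart E A ∧ (Nout E A).ncard = kappa E ∧
    ∀ B : Set V, IsPart E B → (Nout E B).ncard = kappa E → A.ncard ≤ B.ncard
/-- The double coset `K s K`. -/
def dcoset {G : Type*} [Group G] (K : Subgroup G) (s : G) : Set G :=
  {g | ∃ h₁ ∈ K, ∃ h₂ ∈ K, g = h₁ * s * h₂}

/-- Edge relation of the Cayley coset digraph `𝒢(G,H,S)` on the left cosets `G ⧸ H`:
there is an edge from `g₁H` to `g₂H` iff `g₁⁻¹g₂ ∈ HsH` for some `s ∈ S`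
(equivalently, `g₁Hs ∩ g₂H ≠ ∅`). -/
def cayleyRel {G : Type*} [Group G] (H : Subgroup G) (S : Set G) :
    G ⧸ H → G ⧸ H → Prop :=
  fun x y => ∃ s ∈ S, ∃ g₁ g₂ : G, (g₁ : G ⧸ H) = x ∧ (g₂ : G ⧸ H) = y ∧
    g₁⁻¹ * g₂ ∈ dcoset H s

/-- `d_s = |HsH/H|`, the number of left cosets of `H` contained in `HsH`. -/
noncomputable def dval {G : Type*} [Group G] (H : Subgroup G) (s : G) : ℕ :=
  ((QuotientGroup.mk '' dcoset H s : Set (G ⧸ H))).ncard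

/-- `Gᵢ = ⟨H ∪ {s₁,…,sᵢ}⟩` for an ordered list of generators. -/
def towerGroup1 {G : Type*} [Group G] [DecidableEq G] (H : Subgroup G)
    (s : ℕ → G) (i : ℕ) : Subgroup G :=
  Subgroup.closure ((H : Set G) ∪ ((Finset.Icc 1 i).image s : Finset G))

/-!
Every vertex of `𝒢 = 𝒢(G,H,S)` has out-degree `d = Σ d_s`, since the double cosets `HsH`
are pairwise disjoint and miss `H`; hence `κ ≤ d`.

For `κ ≥ d`, take an atom of `𝒢` or of its reverse, whichever is smaller. The reverse is
`𝒢(G,H,S⁻¹)`, which satisfies the same hypotheses, so we may take an atom `A` of `𝒢`. Distinct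
atoms are then disjoint, so the translates of `A` form blocks of the `G`-action: the atom through
`H` is `K/H` for the subgroup `K ≥ H` stabilising it, and its out-neighbourhood is `(KSH ∖ K)/H`.
Strong connectivity forces `S ⊄ K`, and induction along `G₁ < G₂ < ⋯`, replacing `K` by
`K ∩ Gₙ₋₁`, shows `|KSH ∖ K| ≥ Σ |HsH|`. The case `Gₙ₋₁ ≤ K` uses `|Gᵢ| ≥ 2 Σ_{j ≤ i} |Hs_jH|`,
which follows from `|G₁| ≥ 2|Hs₁H|` (this is where `Hs₁⁻¹H ≠ Hs₁H` enters), `|Gᵢ₊₁| ≥ 2|Gᵢ|`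
and `d_{sᵢ₊₁} ≤ dᵢ`.
-/

open scoped Pointwise

section Digraph

variable {V : Type*} {E : V → V → Prop}

theorem IsPart.not_scOn_compl_nout {F : Set V} (hF : IsPart E F) : ¬ SCOn E (Nout E F)ᶜ := by
  obtain ⟨⟨a, ha⟩, ⟨b, hb⟩⟩ := hF
  simp only [Set.mem_compl_iff, Set.mem_union, not_or] at hb
  intro h
  have closed : ∀ c, Relation.ReflTransGen
      (fun x y => x ∈ (Nout E F)ᶜ ∧ y ∈ (Nout E F)ᶜ ∧ E x y) a c → c ∈ F := by
    intro c hc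
    induction hc with
    | refl => exact ha
    | @tail p q _ hpq hp => by_contra hq; exact hpq.2.1 ⟨hq, p, hp, hpq.2.2⟩
  exact hb.1 (closed b (h a (fun haN => haN.1 ha) b hb.2))

theorem exists_isPart_nout_subset {T : Set V} (h : ¬ SCOn E Tᶜ) :
    ∃ F, IsPart E F ∧ Nout E F ⊆ T := by
  simp only [SCOn, not_forall] at h
  obtain ⟨a, ha, b, hb, hab⟩ := h
  set F : Set V := {c | c ∈ Tᶜ ∧
    Relation.ReflTransGen (fun x y => x ∈ Tᶜ ∧ y ∈ Tᶜ ∧ E x y) a c}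
  have hsub : Nout E F ⊆ T := by
    rintro y ⟨hyF, x, hxF, hxy⟩
    by_contra hyT
    exact hyF ⟨hyT, hxF.2.tail ⟨hxF.1, hyT, hxy⟩⟩
  refine ⟨F, ⟨⟨a, ha, .refl⟩, ⟨b, ?_⟩⟩, hsub⟩
  rintro (hbF | hbN)
  · exact hab hbF.2
  · exact hb (hsub hbN)

theorem SC.nout_nonempty (hE : SC E) {A : Set V} (hA : IsPart E A) : (Nout E A).Nonempty := by
  obtain ⟨⟨a, ha⟩, ⟨b, hb⟩⟩ := hA
  by_contra hN
  have closed : ∀ c, Relation.ReflTransGen E a c → c ∈ A := by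
    intro c hc
    induction hc with
    | refl => exact ha
    | @tail p q _ hpq hp => by_contra hq; exact hN ⟨q, hq, p, hp, hpq⟩
  exact hb (Or.inl (closed b (hE a b)))

theorem SC.flip (hE : SC E) : SC (flip E) := fun a b => Relation.reflTransGen_swap.mpr (hE b a)

theorem scOn_flip {A : Set V} : SCOn (flip E) A ↔ SCOn E A := by
  have swap : ∀ {R : V → V → Prop}, SCOn R A → SCOn (flip R) A := fun h a ha b hb =>
    Relation.ReflTransGen.mono (fun x y hxy => ⟨hxy.2.1, hxy.1, hxy.2.2⟩) _ _
      (Relation.reflTransGen_swap.mpr (h b hb a ha))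
  exact ⟨swap, swap⟩

theorem kappa_flip [Finite V] : kappa (flip E) = kappa E := by
  simp only [kappa, scOn_flip]

theorem nout_flip_compl_subset (A : Set V) : Nout (flip E) (A ∪ Nout E A)ᶜ ⊆ Nout E A := by
  rintro z ⟨hzB, y, hyB, hzy⟩
  rw [Set.notMem_compl_iff] at hzB
  simp only [Set.mem_compl_iff, Set.mem_union, not_or] at hyB
  rcases hzB with hzA | hzN
  · exact absurd ⟨hyB.1, z, hzA, hzy⟩ hyB.2
  · exact hzN

theorem IsPart.flip_compl_union_nout {A : Set V} (hA : IsPart E A) :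
    IsPart (flip E) (A ∪ Nout E A)ᶜ := by
  refine ⟨hA.2, ?_⟩
  obtain ⟨a, ha⟩ := hA.1
  refine ⟨a, fun h => ?_⟩
  rcases h with h | h
  · exact h (Or.inl ha)
  · exact (nout_flip_compl_subset A h).1 ha

theorem compl_union_nout_union (X Y : Set V) :
    ((X ∪ Y) ∪ Nout E (X ∪ Y))ᶜ = (X ∪ Nout E X)ᶜ ∩ (Y ∪ Nout E Y)ᶜ := by
  ext z
  simp only [Nout, Set.mem_compl_iff, Set.mem_union, Set.mem_inter_iff, Set.mem_ofPred_eq]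
  grind

variable [Finite V]

theorem kappa_le_ncard_nout {F : Set V} (hF : IsPart E F) : kappa E ≤ (Nout E F).ncard := by
  rw [kappa, if_pos ⟨_, hF.not_scOn_compl_nout⟩]
  exact Nat.sInf_le ⟨_, rfl, hF.not_scOn_compl_nout⟩

theorem kappa_eq_of_forall_not_isPart (h : ∀ F, ¬ IsPart E F) : kappa E = Nat.card V - 1 := by
  rw [kappa, if_neg]
  rintro ⟨T, hT⟩
  obtain ⟨F, hF, -⟩ := exists_isPart_nout_subset hT
  exact h F hF

theorem exists_isPart_ncard_nout_eq_kappa {F₀ : Set V} (hF₀ : IsPart E F₀) :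
    ∃ F, IsPart E F ∧ (Nout E F).ncard = kappa E := by
  have hcut : ∃ T : Set V, ¬ SCOn E Tᶜ := ⟨_, hF₀.not_scOn_compl_nout⟩
  obtain ⟨T, hTk, hT⟩ := Nat.sInf_mem (s := {m | ∃ T : Set V, T.ncard = m ∧ ¬ SCOn E Tᶜ})
    (let ⟨T, hT⟩ := hcut; ⟨_, T, rfl, hT⟩)
  obtain ⟨F, hF, hsub⟩ := exists_isPart_nout_subset hT
  refine ⟨F, hF, le_antisymm ?_ (kappa_le_ncard_nout hF)⟩
  rw [kappa, if_pos hcut, ← hTk]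
  exact Set.ncard_le_ncard hsub

theorem exists_isAtomD {F₀ : Set V} (hF₀ : IsPart E F₀) : ∃ A, IsAtomD E A := by
  obtain ⟨A, ⟨hA, hAk⟩, hmin⟩ := Set.exists_min_image
    {F | IsPart E F ∧ (Nout E F).ncard = kappa E} Set.ncard (Set.toFinite _)
    (exists_isPart_ncard_nout_eq_kappa hF₀)
  exact ⟨A, hA, hAk, fun B hB hBk => hmin B ⟨hB, hBk⟩⟩

theorem IsAtomD.ncard_eq {A B : Set V} (hA : IsAtomD E A) (hB : IsAtomD E B) :
    A.ncard = B.ncard :=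
  le_antisymm (hA.2.2 B hB.1 hB.2.1) (hB.2.2 A hA.1 hA.2.1)

theorem ncard_add_ncard_nout_add_ncard_compl (A : Set V) :
    A.ncard + (Nout E A).ncard + (A ∪ Nout E A)ᶜ.ncard = Nat.card V := by
  rw [← Set.ncard_union_eq (Set.disjoint_left.mpr fun _ hx hnx => hnx.1 hx)]
  exact Set.ncard_add_ncard_compl _

theorem kappa_le_card_sub_one : kappa E ≤ Nat.card V - 1 := by
  by_cases h : ∃ F, IsPart E F
  · obtain ⟨F, ⟨hF, hFc⟩⟩ := h
    have hsum := ncard_add_ncard_nout_add_ncard_compl (E := E) F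
    have := (Set.ncard_pos (Set.toFinite F)).mpr hF
    have := (Set.ncard_pos (Set.toFinite _)).mpr hFc
    have := kappa_le_ncard_nout ⟨hF, hFc⟩
    omega
  · exact (kappa_eq_of_forall_not_isPart (not_exists.mp h)).le

theorem ncard_nout_singleton_of_not_isPart {v : V} (hv : ¬ IsPart E {v}) :
    (Nout E {v}).ncard = Nat.card V - 1 := by
  have hcompl : ({v} ∪ Nout E {v})ᶜ = ∅ :=
    Set.not_nonempty_iff_eq_empty.mp fun h => hv ⟨Set.singleton_nonempty v, h⟩
  have := ncard_add_ncard_nout_add_ncard_compl (E := E) {v}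
  rw [hcompl, Set.ncard_empty, Set.ncard_singleton] at this
  omega

theorem kappa_le_ncard_nout_singleton (v : V) : kappa E ≤ (Nout E {v}).ncard := by
  by_cases hv : IsPart E {v}
  · exact kappa_le_ncard_nout hv
  · rw [ncard_nout_singleton_of_not_isPart hv]
    exact kappa_le_card_sub_one

end Digraph

section Atoms

variable {V : Type*} [Finite V] {E : V → V → Prop}

theorem ncard_nout_flip_compl_union_nout {A : Set V} (hA : IsPart E A)
    (hAk : (Nout E A).ncard = kappa E) :
    (Nout (flip E) (A ∪ Nout E A)ᶜ).ncard = kappa (flip E) :=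
  le_antisymm (kappa_flip (E := E) ▸ hAk ▸ Set.ncard_le_ncard (nout_flip_compl_subset A))
    (kappa_le_ncard_nout hA.flip_compl_union_nout)

theorem ncard_nout_inter_add_ncard_nout_union_le (X Y : Set V) :
    (Nout E (X ∩ Y)).ncard + (Nout E (X ∪ Y)).ncard
      ≤ (Nout E X).ncard + (Nout E Y).ncard := by
  have hunion : Nout E (X ∩ Y) ∪ Nout E (X ∪ Y) ⊆ Nout E X ∪ Nout E Y := by
    rintro z (⟨hz, x, hx, e⟩ | ⟨hz, x, hx | hx, e⟩)
    · by_cases hzX : z ∈ X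
      · exact Or.inr ⟨fun hzY => hz ⟨hzX, hzY⟩, x, hx.2, e⟩
      · exact Or.inl ⟨hzX, x, hx.1, e⟩
    · exact Or.inl ⟨fun h => hz (Or.inl h), x, hx, e⟩
    · exact Or.inr ⟨fun h => hz (Or.inr h), x, hx, e⟩
  have hinter : Nout E (X ∩ Y) ∩ Nout E (X ∪ Y) ⊆ Nout E X ∩ Nout E Y := by
    rintro z ⟨⟨-, x, hx, e⟩, ⟨hz, -⟩⟩
    exact ⟨⟨fun h => hz (Or.inl h), x, hx.1, e⟩, ⟨fun h => hz (Or.inr h), x, hx.2, e⟩⟩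
  rw [← Set.ncard_union_add_ncard_inter (Nout E (X ∩ Y)),
    ← Set.ncard_union_add_ncard_inter (Nout E X)]
  exact add_le_add (Set.ncard_le_ncard hunion) (Set.ncard_le_ncard hinter)

theorem IsAtomD.eq_of_inter_nonempty {A B : Set V} (hA : IsAtomD E A) (hB : IsAtomD E B)
    (hrev : ∀ F, IsPart (flip E) F → (Nout (flip E) F).ncard = kappa (flip E) →
      A.ncard ≤ F.ncard)
    (hAB : (A ∩ B).Nonempty) : A = B := by
  have hpartAB : IsPart E (A ∩ B) := by
    refine ⟨hAB, hA.1.2.mono (Set.compl_subset_compl.mpr ?_)⟩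
    rintro z (h | ⟨hzAB, x, hx, e⟩)
    · exact Or.inl h.1
    · by_cases hzA : z ∈ A
      · exact Or.inl hzA
      · exact Or.inr ⟨hzA, x, hx.1, e⟩
  have hsub := ncard_nout_inter_add_ncard_nout_union_le (E := E) A B
  have hAB_le := kappa_le_ncard_nout hpartAB
  have hBA := hA.ncard_eq hB
  rw [hA.2.1, hB.2.1] at hsub
  by_cases hout : ((A ∪ Nout E A)ᶜ ∩ (B ∪ Nout E B)ᶜ).Nonempty
  · have hpartU : IsPart E (A ∪ B) :=
      ⟨hA.1.1.mono Set.subset_union_left, compl_union_nout_union A B ▸ hout⟩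
    have := kappa_le_ncard_nout hpartU
    have hmin := hA.2.2 (A ∩ B) hpartAB (by omega)
    have hAB_A := Set.eq_of_subset_of_ncard_le Set.inter_subset_left hmin
    have hAB_B := Set.eq_of_subset_of_ncard_le Set.inter_subset_right (hBA ▸ hmin)
    rw [← hAB_A, hAB_B]
  · -- `A ∪ B` together with its out-neighbourhood covers everything, so counting
    -- with `|A| ≤ |(A ∪ N(A))ᶜ|` forces `|N(A ∪ B)| > κ`.
    have hempty : ((A ∪ B) ∪ Nout E (A ∪ B))ᶜ = ∅ := by
      rw [compl_union_nout_union]; exact Set.not_nonempty_iff_eq_empty.mp hout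
    have hU := ncard_add_ncard_nout_add_ncard_compl (E := E) (A ∪ B)
    have hAsum := ncard_add_ncard_nout_add_ncard_compl (E := E) A
    rw [hempty, Set.ncard_empty] at hU
    rw [hA.2.1] at hAsum
    have := Set.ncard_union_add_ncard_inter A B
    have := hrev _ hA.1.flip_compl_union_nout (ncard_nout_flip_compl_union_nout hA.1 hA.2.1)
    have := (Set.ncard_pos (Set.toFinite _)).mpr hAB
    omega

end Atoms

section Action

variable {G V : Type*} [Group G] [MulAction G V] {E : V → V → Prop}

theorem nout_smul (hE : ∀ (g : G) x y, E (g • x) (g • y) ↔ E x y) (g : G) (A : Set V) :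
    Nout E (g • A) = g • Nout E A := by
  ext z
  simp only [Nout, Set.mem_smul_set_iff_inv_smul_mem, Set.mem_ofPred_eq]
  refine and_congr_right fun _ => ⟨?_, ?_⟩
  · rintro ⟨y, hy, e⟩
    exact ⟨g⁻¹ • y, hy, (hE g⁻¹ y z).mpr e⟩
  · rintro ⟨y, hy, e⟩
    exact ⟨g • y, by rwa [inv_smul_smul], by rwa [← hE g⁻¹, inv_smul_smul]⟩

theorem IsPart.smul (hE : ∀ (g : G) x y, E (g • x) (g • y) ↔ E x y) {A : Set V}
    (hA : IsPart E A) (g : G) : IsPart E (g • A) := by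
  refine ⟨hA.1.smul_set, ?_⟩
  rw [nout_smul hE, ← Set.smul_set_union, ← Set.smul_set_compl]
  exact hA.2.smul_set

theorem IsAtomD.smul [Finite V] (hE : ∀ (g : G) x y, E (g • x) (g • y) ↔ E x y) {A : Set V}
    (hA : IsAtomD E A) (g : G) : IsAtomD E (g • A) := by
  refine ⟨hA.1.smul hE g, ?_, fun B hB hBk => ?_⟩
  · rw [nout_smul hE, Set.ncard_smul_set]; exact hA.2.1
  · rw [Set.ncard_smul_set]; exact hA.2.2 B hB hBk

theorem mem_stabilizer_iff_smul_mem {A : Set V}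
    (hA : ∀ g : G, (g • A ∩ A).Nonempty → g • A = A) {x : V} (hx : x ∈ A) (g : G) :
    g ∈ MulAction.stabilizer G A ↔ g • x ∈ A := by
  rw [MulAction.mem_stabilizer_iff]
  refine ⟨fun h => h ▸ Set.smul_mem_smul_set hx, fun h => hA g ⟨_, Set.smul_mem_smul_set hx, h⟩⟩

end Action

theorem IsAtomD.exists_subgroup_eq_image_mk {G : Type*} [Group G] {H : Subgroup G}
    [Finite (G ⧸ H)] {E : G ⧸ H → G ⧸ H → Prop} (hE : ∀ (g : G) x y, E (g • x) (g • y) ↔ E x y)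
    {A : Set (G ⧸ H)} (hA : IsAtomD E A)
    (hrev : ∀ F, IsPart (flip E) F → (Nout (flip E) F).ncard = kappa (flip E) →
      A.ncard ≤ F.ncard)
    (h1 : ((1 : G) : G ⧸ H) ∈ A) :
    ∃ K : Subgroup G, H ≤ K ∧ A = QuotientGroup.mk '' (K : Set G) := by
  have hmem (g : G) : g ∈ MulAction.stabilizer G A ↔ (g : G ⧸ H) ∈ A := by
    rw [mem_stabilizer_iff_smul_mem (fun g hg => (hA.eq_of_inter_nonempty (hA.smul hE g) hrev
      (Set.inter_comm _ _ ▸ hg)).symm) h1, MulAction.Quotient.smul_mk, smul_eq_mul, mul_one]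
  refine ⟨MulAction.stabilizer G A, fun h hh => (hmem h).mpr ?_, ?_⟩
  · rwa [(QuotientGroup.eq (a := h) (b := 1)).mpr (by simpa using hh)]
  · conv_lhs => rw [← Set.image_preimage_eq A QuotientGroup.mk_surjective]
    exact congrArg _ (Set.ext fun g => (hmem g).symm)

section CayleyCoset

variable {G : Type*} [Group G] {H : Subgroup G}

theorem dcoset_eq_doubleCoset (H : Subgroup G) (s : G) :
    dcoset H s = DoubleCoset.doubleCoset s H H := by
  ext
  simp [dcoset, DoubleCoset.mem_doubleCoset]

theorem dcoset_inv (H : Subgroup G) (s : G) : (dcoset H s)⁻¹ = dcoset H s⁻¹ := by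
  ext x
  simp only [dcoset, Set.mem_inv, Set.mem_ofPred_eq]
  constructor <;> rintro ⟨h₁, hh₁, h₂, hh₂, hx⟩ <;>
    exact ⟨h₂⁻¹, inv_mem hh₂, h₁⁻¹, inv_mem hh₁, by rw [← inv_inv x, hx]; group⟩

theorem mul_mem_dcoset {s w h : G} (hw : w ∈ dcoset H s) (hh : h ∈ H) : w * h ∈ dcoset H s := by
  obtain ⟨h₁, hh₁, h₂, hh₂, rfl⟩ := hw
  exact ⟨h₁, hh₁, h₂ * h, mul_mem hh₂ hh, by group⟩

theorem dcoset_subset {M : Subgroup G} (hHM : H ≤ M) {s : G} (hs : s ∈ M) :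
    dcoset H s ⊆ M := by
  rintro _ ⟨h₁, hh₁, h₂, hh₂, rfl⟩
  exact mul_mem (mul_mem (hHM hh₁) hs) (hHM hh₂)

theorem disjoint_dcoset {M : Subgroup G} (hHM : H ≤ M) {s : G} (hs : s ∉ M) :
    Disjoint (dcoset H s) M := by
  refine Set.disjoint_left.mpr ?_
  rintro _ ⟨h₁, hh₁, h₂, hh₂, rfl⟩ hmem
  exact hs ((Subgroup.mul_mem_cancel_right M (hHM hh₂)).mp
    ((Subgroup.mul_mem_cancel_left M (hHM hh₁)).mp (mul_assoc h₁ s h₂ ▸ hmem)))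

variable (S : Set G)

theorem cayleyRel_mk_iff (u : G) (z : G ⧸ H) :
    cayleyRel H S u z ↔ ∃ s ∈ S, ∃ w ∈ dcoset H s, z = ((u * w : G) : G ⧸ H) := by
  constructor
  · rintro ⟨s, hs, g₁, g₂, hg₁, rfl, hw⟩
    have hu : g₁⁻¹ * u ∈ H := QuotientGroup.eq.mp hg₁
    refine ⟨s, hs, u⁻¹ * g₂, ?_, by rw [mul_inv_cancel_left]⟩
    obtain ⟨h₁, hh₁, h₂, hh₂, hw⟩ := hw
    refine ⟨(g₁⁻¹ * u)⁻¹ * h₁, mul_mem (inv_mem hu) hh₁, h₂, hh₂, ?_⟩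
    rw [mul_assoc _ h₁, mul_assoc _ (h₁ * s), ← hw]
    group
  · rintro ⟨s, hs, w, hw, rfl⟩
    exact ⟨s, hs, u, u * w, rfl, rfl, by rwa [inv_mul_cancel_left]⟩

theorem cayleyRel_smul_iff (g : G) (x y : G ⧸ H) :
    cayleyRel H S (g • x) (g • y) ↔ cayleyRel H S x y := by
  have key (g : G) (x y : G ⧸ H) : cayleyRel H S x y → cayleyRel H S (g • x) (g • y) := by
    rintro ⟨s, hs, g₁, g₂, rfl, rfl, hw⟩
    exact ⟨s, hs, g * g₁, g * g₂, rfl, rfl, by rwa [mul_inv_rev, mul_assoc, inv_mul_cancel_left]⟩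
  exact ⟨fun h => by simpa using key g⁻¹ _ _ h, key g x y⟩

theorem flip_cayleyRel : flip (cayleyRel H S) = cayleyRel H S⁻¹ := by
  have key (S : Set G) (x y : G ⧸ H) : cayleyRel H S y x → cayleyRel H S⁻¹ x y := by
    rintro ⟨s, hs, g₁, g₂, h₁, h₂, hw⟩
    refine ⟨s⁻¹, Set.inv_mem_inv.mpr hs, g₂, g₁, h₂, h₁, ?_⟩
    rw [← dcoset_inv, ← inv_inv (g₂⁻¹ * g₁), Set.inv_mem_inv]
    simpa using hw
  funext x y
  exact propext ⟨key S x y, fun h => (by simpa using key S⁻¹ y x h : cayleyRel H S y x)⟩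

theorem nout_cayleyRel_singleton_one (hSH : ∀ s ∈ S, s ∉ H) :
    Nout (cayleyRel H S) {((1 : G) : G ⧸ H)} = ⋃ s ∈ S, QuotientGroup.mk '' dcoset H s := by
  ext z
  simp only [Nout, Set.mem_singleton_iff, exists_eq_left, cayleyRel_mk_iff, one_mul,
    Set.mem_iUnion, Set.mem_image, Set.mem_ofPred_eq]
  constructor
  · rintro ⟨-, s, hs, w, hw, rfl⟩
    exact ⟨s, hs, w, hw, rfl⟩
  · rintro ⟨s, hs, w, hw, rfl⟩
    refine ⟨fun h => Set.disjoint_left.mp (disjoint_dcoset le_rfl (hSH s hs)) hw ?_, s, hs, w, hw, rfl⟩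
    simpa using QuotientGroup.eq.mp h

theorem nout_cayleyRel_image_mk_subgroup {K : Subgroup G} (hHK : H ≤ K) :
    Nout (cayleyRel H S) (QuotientGroup.mk '' (K : Set G)) =
      QuotientGroup.mk '' (((K : Set G) * S * (H : Set G)) \ K) := by
  ext z
  constructor
  · rintro ⟨hz, _, ⟨u, hu, rfl⟩, e⟩
    obtain ⟨s, hs, w, ⟨h₁, hh₁, h₂, hh₂, rfl⟩, rfl⟩ := (cayleyRel_mk_iff S u z).mp e
    refine ⟨u * h₁ * s * h₂, ⟨Set.mul_mem_mul (Set.mul_mem_mul (mul_mem hu (hHK hh₁)) hs) hh₂,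
      fun hK => hz ⟨_, hK, congrArg _ (by group)⟩⟩, congrArg _ (by group)⟩
  · rintro ⟨_, ⟨⟨_, ⟨k, hk, s, hs, rfl⟩, h, hh, rfl⟩, hnot⟩, rfl⟩
    refine ⟨?_, k, ⟨k, hk, rfl⟩, (cayleyRel_mk_iff S k _).mpr ⟨s, hs, s * h, ?_, by group⟩⟩
    · rintro ⟨u, hu, heq⟩
      exact hnot (by simpa using mul_mem hu (hHK (QuotientGroup.eq.mp heq)))
    · exact ⟨1, one_mem H, h, hh, by group⟩

theorem ncard_eq_card_mul_ncard_image_mk {X : Set G} (hX : ∀ x ∈ X, ∀ h ∈ H, x * h ∈ X) :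
    X.ncard = Nat.card H * (QuotientGroup.mk '' X : Set (G ⧸ H)).ncard := by
  have hXH : X * H = X :=
    (Set.mul_subset_iff.mpr hX).antisymm fun x hx => ⟨x, hx, 1, one_mem H, mul_one x⟩
  have := Subgroup.card_mul_eq_card_subgroup_mul_card_quotient H X
  rwa [hXH, Nat.card_coe_set_eq, Nat.card_coe_set_eq] at this

theorem ncard_dcoset (H : Subgroup G) (s : G) : (dcoset H s).ncard = Nat.card H * dval H s :=
  ncard_eq_card_mul_ncard_image_mk fun _ hw _ hh => mul_mem_dcoset hw hh

theorem sum_ncard_dcoset (H : Subgroup G) (s : ℕ → G) (I : Finset ℕ) :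
    ∑ i ∈ I, (dcoset H (s i)).ncard = Nat.card H * ∑ i ∈ I, dval H (s i) := by
  simp only [ncard_dcoset, Finset.mul_sum]

end CayleyCoset

section Counting

variable {G : Type*} [Group G] [Finite G] {H : Subgroup G}

theorem ncard_nout_cayleyRel_singleton_one (S : Finset G) (hSH : ∀ s ∈ S, s ∉ H)
    (hdc : ∀ a ∈ S, ∀ b ∈ S, a ≠ b → dcoset H a ≠ dcoset H b) :
    (Nout (cayleyRel H S) {((1 : G) : G ⧸ H)}).ncard = ∑ s ∈ S, dval H s := by
  rw [nout_cayleyRel_singleton_one _ hSH, Set.Finite.ncard_biUnion (Finset.finite_toSet S)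
    (fun _ _ => Set.toFinite _), finsum_mem_coe_finset]
  · rfl
  · intro a ha b hb hab
    refine Set.disjoint_left.mpr ?_
    rintro _ ⟨x, hx, rfl⟩ ⟨y, hy, hxy⟩
    have hx' : x ∈ dcoset H b := by
      simpa using mul_mem_dcoset hy (QuotientGroup.eq.mp hxy)
    have hmeet : ¬Disjoint (dcoset H a) (dcoset H b) := Set.not_disjoint_iff.mpr ⟨x, hx, hx'⟩
    simp only [dcoset_eq_doubleCoset] at hmeet hdc
    exact hdc a ha b hb hab (DoubleCoset.eq_of_not_disjoint hmeet)

theorem dval_inv (s : G) : dval H s⁻¹ = dval H s := by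
  have h := ncard_dcoset H s⁻¹
  rw [← dcoset_inv, Set.ncard_inv, ncard_dcoset] at h
  exact (Nat.eq_of_mul_eq_mul_left Nat.card_pos h).symm

end Counting

section Boundary

variable {G : Type*} [Group G] {H K : Subgroup G} {T : Set G}

theorem dcoset_subset_mul_singleton_mul (hHK : H ≤ K) (t : G) :
    dcoset H t ⊆ (K : Set G) * {t} * (H : Set G) := by
  rw [dcoset_eq_doubleCoset]
  exact Set.mul_subset_mul_right (Set.mul_subset_mul_right hHK)

theorem mul_singleton_mul_subset_mul_diff (hHK : H ≤ K) {t : G} (ht : t ∈ T) (htK : t ∉ K) :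
    (K : Set G) * {t} * (H : Set G) ⊆ ((K : Set G) * T * (H : Set G)) \ K := by
  rintro _ ⟨_, ⟨k, hk, _, rfl, rfl⟩, h, hh, rfl⟩
  exact ⟨Set.mul_mem_mul (Set.mul_mem_mul hk ht) hh, fun hmem =>
    htK ((K.mul_mem_cancel_left hk).mp ((K.mul_mem_cancel_right (hHK hh)).mp hmem))⟩

theorem smul_mul_diff_subset {g : G} (hg : g ∈ K) :
    g • (((K : Set G) * T * (H : Set G)) \ K) ⊆ ((K : Set G) * T * (H : Set G)) \ K := by
  rintro _ ⟨_, ⟨⟨_, ⟨k, hk, t, ht, rfl⟩, h, hh, rfl⟩, hnot⟩, rfl⟩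
  refine ⟨⟨_, ⟨g * k, mul_mem hg hk, t, ht, rfl⟩, h, hh, by simp only [smul_eq_mul, mul_assoc]⟩,
    fun hmem => hnot ((K.mul_mem_cancel_left hg).mp hmem)⟩

theorem inf_mul_diff_subset {M : Subgroup G} {S : Set G} (hHM : H ≤ M) (hSM : S ⊆ M)
    (hST : S ⊆ T) :
    (((K ⊓ M : Subgroup G) : Set G) * S * (H : Set G)) \ (K ⊓ M : Subgroup G) ⊆
      (M : Set G) ∩ (((K : Set G) * T * (H : Set G)) \ K) := by
  rintro _ ⟨⟨_, ⟨k, hk, t, ht, rfl⟩, h, hh, rfl⟩, hnot⟩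
  have hM : k * t * h ∈ M := mul_mem (mul_mem hk.2 (hSM ht)) (hHM hh)
  exact ⟨hM, Set.mul_mem_mul (Set.mul_mem_mul hk.1 (hST ht)) hh, fun hK => hnot ⟨hK, hM⟩⟩

variable [Finite G] {M : Subgroup G} {Y : Set G}

theorem two_mul_ncard_le_ncard_mul_diff {g : G} (hgK : g ∈ K) (hgM : g ∉ M)
    (hY : Y ⊆ (M : Set G) ∩ (((K : Set G) * T * (H : Set G)) \ K)) :
    2 * Y.ncard ≤ (((K : Set G) * T * (H : Set G)) \ K).ncard := by
  have hdisj : Disjoint Y (g • Y) := by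
    refine Set.disjoint_left.mpr ?_
    rintro _ hgy ⟨y, hy, rfl⟩
    exact hgM ((M.mul_mem_cancel_right (hY hy).1).mp (hY hgy).1)
  calc 2 * Y.ncard = (Y ∪ g • Y).ncard := by
        rw [Set.ncard_union_eq hdisj, Set.ncard_smul_set, two_mul]
    _ ≤ _ := Set.ncard_le_ncard (Set.union_subset (hY.trans Set.inter_subset_right)
        ((Set.smul_set_mono (hY.trans Set.inter_subset_right)).trans (smul_mul_diff_subset hgK)))

theorem ncard_add_ncard_dcoset_le_ncard_mul_diff (hHK : H ≤ K) (hHM : H ≤ M) {t : G}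
    (ht : t ∈ T) (htK : t ∉ K) (htM : t ∉ M)
    (hY : Y ⊆ (M : Set G) ∩ (((K : Set G) * T * (H : Set G)) \ K)) :
    Y.ncard + (dcoset H t).ncard ≤ (((K : Set G) * T * (H : Set G)) \ K).ncard := by
  rw [← Set.ncard_union_eq (Set.disjoint_of_subset_left (hY.trans Set.inter_subset_left)
    (disjoint_dcoset hHM htM).symm)]
  exact Set.ncard_le_ncard (Set.union_subset (hY.trans Set.inter_subset_right)
    ((dcoset_subset_mul_singleton_mul hHK t).trans (mul_singleton_mul_subset_mul_diff hHK ht htK)))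

end Boundary

section Tower

variable {G : Type*} [DecidableEq G]

abbrev genSet (s : ℕ → G) (n : ℕ) : Set G := ((Finset.Icc 1 n).image s : Finset G)

theorem genSet_succ (s : ℕ → G) (n : ℕ) : genSet s (n + 1) = insert (s (n + 1)) (genSet s n) := by
  rw [genSet, ← Finset.insert_Icc_right_eq_Icc_add_one (by omega : 1 ≤ n + 1), Finset.image_insert,
    Finset.coe_insert]

variable [Group G]

theorem genSet_inv (s : ℕ → G) (n : ℕ) : genSet (fun j => (s j)⁻¹) n = (genSet s n)⁻¹ := by
  simp only [genSet, Finset.coe_image, ← Set.image_inv_eq_inv, Set.image_image]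

variable (H : Subgroup G) (s : ℕ → G)

theorem towerGroup1_le_iff {n : ℕ} {M : Subgroup G} :
    towerGroup1 H s n ≤ M ↔ H ≤ M ∧ genSet s n ⊆ M := by
  rw [towerGroup1, Subgroup.closure_le, Set.union_subset_iff]
  rfl

theorem le_towerGroup1 (n : ℕ) : H ≤ towerGroup1 H s n :=
  ((towerGroup1_le_iff H s).mp le_rfl).1

theorem genSet_subset_towerGroup1 (n : ℕ) : genSet s n ⊆ towerGroup1 H s n :=
  ((towerGroup1_le_iff H s).mp le_rfl).2

theorem towerGroup1_le_succ (n : ℕ) : towerGroup1 H s n ≤ towerGroup1 H s (n + 1) :=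
  (towerGroup1_le_iff H s).mpr ⟨le_towerGroup1 H s _,
    (genSet_succ s n ▸ Set.subset_insert _ _).trans (genSet_subset_towerGroup1 H s _)⟩

theorem notMem_towerGroup1_of_ne {n : ℕ} (h : towerGroup1 H s n ≠ towerGroup1 H s (n + 1)) :
    s (n + 1) ∉ towerGroup1 H s n := fun hs =>
  h ((towerGroup1_le_succ H s n).antisymm ((towerGroup1_le_iff H s).mpr ⟨le_towerGroup1 H s n,
    genSet_succ s n ▸ Set.insert_subset hs (genSet_subset_towerGroup1 H s n)⟩))

theorem towerGroup1_inv (n : ℕ) : towerGroup1 H (fun j => (s j)⁻¹) n = towerGroup1 H s n := by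
  rw [towerGroup1, towerGroup1, ← genSet, ← genSet, genSet_inv, ← inv_coe_set (H := H),
    ← Set.union_inv, Subgroup.closure_inv, inv_coe_set]

end Tower

section Doubling

variable {G : Type*} [Group G] [Finite G]

theorem two_mul_card_le_card_of_lt {A B : Subgroup G} (h : A < B) :
    2 * Nat.card A ≤ Nat.card B := by
  obtain ⟨m, hm⟩ := Subgroup.card_dvd_of_le h.le
  have hm1 : m ≠ 1 := by
    rintro rfl
    exact h.ne (Subgroup.eq_of_le_of_card_ge h.le (by rw [hm, mul_one]))
  have hm0 : m ≠ 0 := by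
    rintro rfl
    exact Nat.card_pos.ne' (hm.trans (mul_zero _))
  rw [hm, mul_comm 2]
  exact Nat.mul_le_mul_left _ (by omega)

theorem two_mul_ncard_dcoset_le {H M : Subgroup G} {s : G} (hinv : dcoset H s⁻¹ ≠ dcoset H s)
    (hHM : H ≤ M) (hs : s ∈ M) : 2 * (dcoset H s).ncard ≤ Nat.card M := by
  have hdisj : Disjoint (dcoset H s) (dcoset H s⁻¹) := by
    rw [dcoset_eq_doubleCoset, dcoset_eq_doubleCoset] at hinv ⊢
    exact not_not.mp fun h => hinv (DoubleCoset.eq_of_not_disjoint h).symm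
  calc 2 * (dcoset H s).ncard = (dcoset H s ∪ dcoset H s⁻¹).ncard := by
        rw [Set.ncard_union_eq hdisj, ← dcoset_inv, Set.ncard_inv, two_mul]
    _ ≤ (M : Set G).ncard :=
        Set.ncard_le_ncard (Set.union_subset (dcoset_subset hHM hs) (dcoset_subset hHM (inv_mem hs)))
    _ = Nat.card M := Nat.card_coe_set_eq _ |>.symm

end Doubling

section Hierarchy

variable {G : Type*} [Group G] [Finite G] [DecidableEq G] (H : Subgroup G) (s : ℕ → G)

theorem two_mul_sum_ncard_dcoset_le_card_towerGroup1 (hinv : dcoset H (s 1)⁻¹ ≠ dcoset H (s 1))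
    {n : ℕ} (hn : 1 ≤ n)
    (hstrict : ∀ i, 1 ≤ i → i < n → towerGroup1 H s i ≠ towerGroup1 H s (i + 1))
    (hdeg : ∀ i, 1 ≤ i → i < n →
      (dcoset H (s (i + 1))).ncard ≤ ∑ j ∈ Finset.Icc 1 i, (dcoset H (s j)).ncard) :
    2 * ∑ i ∈ Finset.Icc 1 n, (dcoset H (s i)).ncard ≤ Nat.card (towerGroup1 H s n) := by
  induction n, hn using Nat.le_induction with
  | base =>
    simpa using two_mul_ncard_dcoset_le hinv (le_towerGroup1 H s 1)
      (genSet_subset_towerGroup1 H s 1 (by simp))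
  | succ n hn ih =>
    have ih := ih (fun i h1 h2 => hstrict i h1 (by omega)) (fun i h1 h2 => hdeg i h1 (by omega))
    have hlt : towerGroup1 H s n < towerGroup1 H s (n + 1) :=
      (towerGroup1_le_succ H s n).lt_of_ne (hstrict n hn (by omega))
    rw [Finset.sum_Icc_succ_top (by omega)]
    have := hdeg n hn (by omega)
    have := two_mul_card_le_card_of_lt hlt
    omega

theorem sum_ncard_dcoset_le_ncard_mul_singleton_mul
    (hinv : dcoset H (s 1)⁻¹ ≠ dcoset H (s 1)) {n : ℕ}
    (hstrict : ∀ i, 1 ≤ i → i < n + 1 → towerGroup1 H s i ≠ towerGroup1 H s (i + 1))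
    (hdeg : ∀ i, 1 ≤ i → i < n + 1 →
      (dcoset H (s (i + 1))).ncard ≤ ∑ j ∈ Finset.Icc 1 i, (dcoset H (s j)).ncard)
    {K : Subgroup G} (hGK : towerGroup1 H s n ≤ K) :
    ∑ i ∈ Finset.Icc 1 (n + 1), (dcoset H (s i)).ncard ≤
      ((K : Set G) * {s (n + 1)} * (H : Set G)).ncard := by
  rw [Finset.sum_Icc_succ_top (by omega)]
  rcases Nat.eq_zero_or_pos n with rfl | hn
  · simpa using Set.ncard_le_ncard
      (dcoset_subset_mul_singleton_mul ((le_towerGroup1 H s 0).trans hGK) (s 1))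
  have := hdeg n hn (by omega)
  calc _ ≤ 2 * ∑ i ∈ Finset.Icc 1 n, (dcoset H (s i)).ncard := by omega
    _ ≤ Nat.card (towerGroup1 H s n) :=
      two_mul_sum_ncard_dcoset_le_card_towerGroup1 H s hinv hn
        (fun i h1 h2 => hstrict i h1 (by omega)) (fun i h1 h2 => hdeg i h1 (by omega))
    _ ≤ Nat.card K := Subgroup.card_le_of_le hGK
    _ = ((K : Set G) * {s (n + 1)}).ncard := by
      rw [Set.mul_singleton, Set.ncard_image_of_injective _ (mul_left_injective _)]
      exact (Nat.card_coe_set_eq (K : Set G)).symm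
    _ ≤ _ := Set.ncard_le_ncard (Set.subset_mul_left _ (one_mem H))

theorem sum_ncard_dcoset_le_ncard_mul_diff (hinv : dcoset H (s 1)⁻¹ ≠ dcoset H (s 1))
    {n : ℕ} (hstrict : ∀ i, 1 ≤ i → i < n → towerGroup1 H s i ≠ towerGroup1 H s (i + 1))
    (hdeg : ∀ i, 1 ≤ i → i < n →
      (dcoset H (s (i + 1))).ncard ≤ ∑ j ∈ Finset.Icc 1 i, (dcoset H (s j)).ncard)
    (K : Subgroup G) (hHK : H ≤ K) (hK : ¬ genSet s n ⊆ K) :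
    ∑ i ∈ Finset.Icc 1 n, (dcoset H (s i)).ncard ≤
      (((K : Set G) * genSet s n * (H : Set G)) \ K).ncard := by
  induction n generalizing K with
  | zero => simp
  | succ n ih =>
    have hsn : s (n + 1) ∈ genSet s (n + 1) := genSet_succ s n ▸ Set.mem_insert _ _
    by_cases hsub : genSet s n ⊆ K
    · have hs : s (n + 1) ∉ K := fun h => hK (genSet_succ s n ▸ Set.insert_subset h hsub)
      exact (sum_ncard_dcoset_le_ncard_mul_singleton_mul H s hinv hstrict hdeg
        ((towerGroup1_le_iff H s).mpr ⟨hHK, hsub⟩)).trans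
        (Set.ncard_le_ncard (mul_singleton_mul_subset_mul_diff hHK hsn hs))
    have hn : 1 ≤ n := Nat.pos_of_ne_zero (by rintro rfl; exact hsub (by simp))
    -- The boundary of `K ⊓ Gₙ` lies in `Gₙ`; the new generator `sₙ₊₁ ∉ Gₙ` adds, outside `Gₙ`,
    -- either the translate of that boundary by `sₙ₊₁` (if `sₙ₊₁ ∈ K`) or `Hsₙ₊₁H`.
    have hIH := ih (fun i h1 h2 => hstrict i h1 (by omega)) (fun i h1 h2 => hdeg i h1 (by omega))
      (K ⊓ towerGroup1 H s n) (le_inf hHK (le_towerGroup1 H s n))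
      fun h => hsub (h.trans fun _ hx => hx.1)
    have hW' := inf_mul_diff_subset (K := K) (le_towerGroup1 H s n)
      (genSet_subset_towerGroup1 H s n) (genSet_succ s n ▸ Set.subset_insert _ _)
    have hsGn := notMem_towerGroup1_of_ne H s (hstrict n hn (by omega))
    rw [Finset.sum_Icc_succ_top (by omega)]
    by_cases hs : s (n + 1) ∈ K
    · have := two_mul_ncard_le_ncard_mul_diff hs hsGn hW'
      have := hdeg n hn (by omega)
      omega
    · have := ncard_add_ncard_dcoset_le_ncard_mul_diff hHK (le_towerGroup1 H s n) hsn hs hsGn hW'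
      omega

end Hierarchy

section LowerBound

variable {G : Type*} [Group G] [Finite G] [DecidableEq G] {H : Subgroup G} {s : ℕ → G} {k : ℕ}

theorem sum_dval_le_kappa_of_isAtomD (hinv : dcoset H (s 1)⁻¹ ≠ dcoset H (s 1))
    (hstrict : ∀ i, 1 ≤ i → i < k → towerGroup1 H s i ≠ towerGroup1 H s (i + 1))
    (hdeg : ∀ i, 1 ≤ i → i < k → dval H (s (i + 1)) ≤ ∑ j ∈ Finset.Icc 1 i, dval H (s j))
    (hconn : SC (cayleyRel H (genSet s k))) {A : Set (G ⧸ H)}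
    (hA : IsAtomD (cayleyRel H (genSet s k)) A)
    (hrev : ∀ F, IsPart (flip (cayleyRel H (genSet s k))) F →
      (Nout (flip (cayleyRel H (genSet s k))) F).ncard = kappa (flip (cayleyRel H (genSet s k))) →
      A.ncard ≤ F.ncard) :
    ∑ i ∈ Finset.Icc 1 k, dval H (s i) ≤ kappa (cayleyRel H (genSet s k)) := by
  have hE := cayleyRel_smul_iff (H := H) (genSet s k)
  obtain ⟨x, hx⟩ := hA.1.1
  obtain ⟨g, rfl⟩ := QuotientGroup.mk_surjective x
  have hA' := hA.smul hE g⁻¹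
  have h1 : ((1 : G) : G ⧸ H) ∈ g⁻¹ • A := by
    rwa [Set.mem_smul_set_iff_inv_smul_mem, inv_inv, MulAction.Quotient.smul_mk, smul_eq_mul,
      mul_one]
  obtain ⟨K, hHK, hK⟩ := hA'.exists_subgroup_eq_image_mk hE
    (fun F hF hFk => (Set.ncard_smul_set _ _).trans_le (hrev F hF hFk)) h1
  have hN := nout_cayleyRel_image_mk_subgroup (genSet s k) hHK
  have hgen : ¬ genSet s k ⊆ K := fun hsub => by
    have hne := hconn.nout_nonempty hA'.1
    rw [hK, hN] at hne
    obtain ⟨_, ⟨w, ⟨hw, hwK⟩, -⟩⟩ := hne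
    obtain ⟨_, ⟨a, ha, b, hb, rfl⟩, h, hh, rfl⟩ := hw
    exact hwK (mul_mem (mul_mem ha (hsub hb)) (hHK hh))
  have key := sum_ncard_dcoset_le_ncard_mul_diff H s hinv hstrict
    (fun i h1 h2 => by rw [sum_ncard_dcoset H, ncard_dcoset]; exact Nat.mul_le_mul_left _ (hdeg i h1 h2))
    K hHK hgen
  rw [sum_ncard_dcoset H, ncard_eq_card_mul_ncard_image_mk, ← hN, ← hK, hA'.2.1] at key
  · exact Nat.le_of_mul_le_mul_left key Nat.card_pos
  · rintro _ ⟨⟨y, hy, h', hh', rfl⟩, hnot⟩ h hh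
    exact ⟨⟨y, hy, h' * h, mul_mem hh' hh, (mul_assoc _ _ _).symm⟩,
      fun hmem => hnot ((K.mul_mem_cancel_right (hHK hh)).mp hmem)⟩

theorem sum_dval_le_kappa (hinv : dcoset H (s 1)⁻¹ ≠ dcoset H (s 1))
    (hstrict : ∀ i, 1 ≤ i → i < k → towerGroup1 H s i ≠ towerGroup1 H s (i + 1))
    (hdeg : ∀ i, 1 ≤ i → i < k → dval H (s (i + 1)) ≤ ∑ j ∈ Finset.Icc 1 i, dval H (s j))
    (hconn : SC (cayleyRel H (genSet s k))) {F : Set (G ⧸ H)}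
    (hF : IsPart (cayleyRel H (genSet s k)) F) :
    ∑ i ∈ Finset.Icc 1 k, dval H (s i) ≤ kappa (cayleyRel H (genSet s k)) := by
  obtain ⟨A, hA⟩ := exists_isAtomD hF
  obtain ⟨B, hB⟩ := exists_isAtomD hF.flip_compl_union_nout
  rcases le_total A.ncard B.ncard with hAB | hBA
  · exact sum_dval_le_kappa_of_isAtomD hinv hstrict hdeg hconn hA
      fun F hF hFk => hAB.trans (hB.2.2 F hF hFk)
  · have hflip : flip (cayleyRel H (genSet s k)) = cayleyRel H (genSet (fun j => (s j)⁻¹) k) := by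
      rw [flip_cayleyRel, genSet_inv]
    have := sum_dval_le_kappa_of_isAtomD (s := fun j => (s j)⁻¹) (by simpa using hinv.symm)
      (by simpa only [towerGroup1_inv] using hstrict) (by simpa only [dval_inv] using hdeg)
      (hflip ▸ hconn.flip) (hflip ▸ hB)
      (by rw [← hflip]; exact fun F hF hFk => hBA.trans (hA.2.2 F hF hFk))
    simpa only [dval_inv, ← hflip, kappa_flip] using this

end LowerBound

theorem stmt_14_general {G : Type*} [Group G] [Finite G] [DecidableEq G] (H : Subgroup G)
    (k : ℕ) (s : ℕ → G)
    (hSH : ∀ i ∈ Finset.Icc 1 k, s i ∉ H)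
    (hdc : ∀ i ∈ Finset.Icc 1 k, ∀ j ∈ Finset.Icc 1 k, i ≠ j →
      dcoset H (s i) ≠ dcoset H (s j))
    (hconn : SC (cayleyRel H (((Finset.Icc 1 k).image s : Finset G) : Set G)))
    (hhier : ∀ i ∈ Finset.Icc 1 k, ∀ j ∈ Finset.Icc 1 k, i ≠ j →
      towerGroup1 H s i ≠ towerGroup1 H s j)
    (hdeg : ∀ i, 1 ≤ i → i < k →
      dval H (s (i + 1)) ≤ ∑ j ∈ Finset.Icc 1 i, dval H (s j))
    (hinv : dcoset H ((s 1)⁻¹) ≠ dcoset H (s 1)) :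
    kappa (cayleyRel H (((Finset.Icc 1 k).image s : Finset G) : Set G)) =
      ∑ i ∈ Finset.Icc 1 k, dval H (s i) := by
  have hdeg1 : (Nout (cayleyRel H (genSet s k)) {((1 : G) : G ⧸ H)}).ncard =
      ∑ i ∈ Finset.Icc 1 k, dval H (s i) := by
    rw [ncard_nout_cayleyRel_singleton_one _ (Finset.forall_mem_image.mpr hSH)
      (Finset.forall_mem_image.mpr fun i hi => Finset.forall_mem_image.mpr fun j hj hij =>
        hdc i hi j hj (ne_of_apply_ne s hij)),
      Finset.sum_image fun i hi j hj hij => by_contra fun hne => hdc i hi j hj hne (congrArg _ hij)]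
  have hstrict : ∀ i, 1 ≤ i → i < k → towerGroup1 H s i ≠ towerGroup1 H s (i + 1) :=
    fun i h1 h2 => hhier i (by simp; omega) (i + 1) (by simp; omega) (by omega)
  refine le_antisymm (hdeg1 ▸ kappa_le_ncard_nout_singleton _) ?_
  by_cases hpart : ∃ F, IsPart (cayleyRel H (genSet s k)) F
  · exact sum_dval_le_kappa hinv hstrict hdeg hconn hpart.choose_spec
  · rw [kappa_eq_of_forall_not_isPart (not_exists.mp hpart), ← hdeg1,
      ncard_nout_singleton_of_not_isPart fun h => hpart ⟨_, h⟩]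

/-- Corollary: in the hierarchical criterion, the assumption `|G₁/H| ≥ d₂` can be
replaced by `Hs₁⁻¹H ≠ Hs₁H`. -/
theorem stmt_14 {G : Type*} [Group G] [Finite G] [DecidableEq G] (H : Subgroup G)
    (k : ℕ) (hk : 2 ≤ k) (s : ℕ → G)
    (hSH : ∀ i ∈ Finset.Icc 1 k, s i ∉ H)
    (hdc : ∀ i ∈ Finset.Icc 1 k, ∀ j ∈ Finset.Icc 1 k, i ≠ j →
      dcoset H (s i) ≠ dcoset H (s j))
    (hconn : SC (cayleyRel H (((Finset.Icc 1 k).image s : Finset G) : Set G)))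
    (hhier : ∀ i ∈ Finset.Icc 1 k, ∀ j ∈ Finset.Icc 1 k, i ≠ j →
      towerGroup1 H s i ≠ towerGroup1 H s j)
    (hdeg : ∀ i, 1 ≤ i → i < k →
      dval H (s (i + 1)) ≤ ∑ j ∈ Finset.Icc 1 i, dval H (s j))
    (hinv : dcoset H ((s 1)⁻¹) ≠ dcoset H (s 1)) :
    kappa (cayleyRel H (((Finset.Icc 1 k).image s : Finset G) : Set G)) =
      ∑ i ∈ Finset.Icc 1 k, dval H (s i) :=
  stmt_14_general H k s hSH hdc hconn hhier hdeg hinv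
end

section
/- Let D be a strongly connected digraph on at least two vertices with edge connectivity λ. Let A be an e-atom of D and let B be a nonempty proper subset of V(D) with |N_e(B)| = λ. Then A ⊆ B, or A ∩ B = ∅, or A ∪ B = V(D). -/
open Classical

/-- The set of edges leaving `A`. -/
def NeEdges {V : Type*} (E : V → V → Prop) (A : Set V) : Set (V × V) :=
  {p | E p.1 p.2 ∧ p.1 ∈ A ∧ p.2 ∉ A}

/-- Edge connectivity: the least cardinality of a set `F` of edges whose removal
leaves a non-strongly-connected digraph. -/
noncomputable def lambdaE {V : Type*} [Finite V] (E : V → V → Prop) : ℕ :=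
  sInf {m | ∃ F : Set (V × V), (∀ p ∈ F, E p.1 p.2) ∧ F.ncard = m ∧
    ¬ SC (fun x y => E x y ∧ (x, y) ∉ F)}

/-- An e-atom: a nonempty proper vertex subset with `λ` outgoing edges, of minimum
cardinality among such sets. -/
def IsEAtom {V : Type*} [Finite V] (E : V → V → Prop) (A : Set V) : Prop :=
  A.Nonempty ∧ A ≠ Set.univ ∧ (NeEdges E A).ncard = lambdaE E ∧
    ∀ B : Set V, B.Nonempty → B ≠ Set.univ → (NeEdges E B).ncard = lambdaE E →
      A.ncard ≤ B.ncard


lemma lambdaE_le_cut {V : Type*} [Finite V] (E : V → V → Prop) (S : Set V)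
    (hne : S.Nonempty) (hproper : S ≠ Set.univ) :
    lambdaE E ≤ (NeEdges E S).ncard := by
  apply Nat.sInf_le
  refine ⟨NeEdges E S, fun p hp => hp.1, rfl, ?_⟩
  obtain ⟨a, ha⟩ := hne
  obtain ⟨b, hb⟩ := (Set.ne_univ_iff_exists_notMem S).mp hproper
  intro h
  have key : ∀ z, Relation.ReflTransGen (fun x y => E x y ∧ (x,y) ∉ NeEdges E S) a z → z ∈ S := by
    intro z hz
    induction hz with
    | refl => exact ha
    | tail _ step ih =>
      by_contra hc
      exact step.2 ⟨step.1, ih, hc⟩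
  exact hb (key b (h a b))

lemma submod {V : Type*} [Finite V] (E : V → V → Prop) (A B : Set V) :
    (NeEdges E (A ∩ B)).ncard + (NeEdges E (A ∪ B)).ncard ≤
    (NeEdges E A).ncard + (NeEdges E B).ncard := by
  have h1 : NeEdges E (A ∩ B) ∪ NeEdges E (A ∪ B) ⊆ NeEdges E A ∪ NeEdges E B := by
    rintro ⟨x, y⟩ (⟨hE, ⟨hxA, hxB⟩, hy⟩ | ⟨hE, hx, hy⟩)
    · by_cases hyA : y ∈ A
      · exact Or.inr ⟨hE, hxB, fun hyB => hy ⟨hyA, hyB⟩⟩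
      · exact Or.inl ⟨hE, hxA, hyA⟩
    · rcases hx with hxA | hxB
      · exact Or.inl ⟨hE, hxA, fun hyA => hy (Or.inl hyA)⟩
      · exact Or.inr ⟨hE, hxB, fun hyB => hy (Or.inr hyB)⟩
  have h2 : NeEdges E (A ∩ B) ∩ NeEdges E (A ∪ B) ⊆ NeEdges E A ∩ NeEdges E B := by
    rintro ⟨x, y⟩ ⟨⟨hE, ⟨hxA, hxB⟩, _⟩, ⟨_, _, hy⟩⟩
    exact ⟨⟨hE, hxA, fun hyA => hy (Or.inl hyA)⟩, ⟨hE, hxB, fun hyB => hy (Or.inr hyB)⟩⟩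
  have e1 := Set.ncard_union_add_ncard_inter (NeEdges E (A ∩ B)) (NeEdges E (A ∪ B))
  have e2 := Set.ncard_union_add_ncard_inter (NeEdges E A) (NeEdges E B)
  have c1 := Set.ncard_le_ncard h1 (Set.toFinite _)
  have c2 := Set.ncard_le_ncard h2 (Set.toFinite _)
  omega

/-- If `A` is an e-atom of a strongly connected digraph on at least two vertices
and `B` is a nonempty proper vertex subset with `|N_e(B)| = λ`, then `A ⊆ B`, or
`A ∩ B = ∅`, or `A ∪ B = V`. -/
theorem stmt_18 {V : Type*} [Finite V] (E : V → V → Prop)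
    (hSC : SC E) (hcard : 2 ≤ Nat.card V)
    (A B : Set V) (hA : IsEAtom E A)
    (hBne : B.Nonempty) (hBuniv : B ≠ Set.univ)
    (hBl : (NeEdges E B).ncard = lambdaE E) :
    A ⊆ B ∨ A ∩ B = ∅ ∨ A ∪ B = Set.univ := by
  by_contra hcon
  push_neg at hcon
  obtain ⟨hAB, hint, huniv⟩ := hcon
  obtain ⟨hAne, hAuniv, hAl, hAmin⟩ := hA
  have hintne : (A ∩ B).Nonempty := hint
  have hintproper : A ∩ B ≠ Set.univ := by
    intro h
    exact hAuniv (Set.eq_univ_of_subset Set.inter_subset_left h)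
  have hunne : (A ∪ B).Nonempty := hBne.mono Set.subset_union_right
  have l1 := lambdaE_le_cut E (A ∩ B) hintne hintproper
  have l2 := lambdaE_le_cut E (A ∪ B) hunne huniv
  have hsub := submod E A B
  rw [hAl, hBl] at hsub
  have hinteq : (NeEdges E (A ∩ B)).ncard = lambdaE E := by omega
  have := hAmin (A ∩ B) hintne hintproper hinteq
  have hlt : (A ∩ B).ncard < A.ncard := by
    apply Set.ncard_lt_ncard _ (Set.toFinite _)
    refine ⟨Set.inter_subset_left, fun h => ?_⟩
    obtain ⟨a, haA, haB⟩ := Set.not_subset.mp hAB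
    exact haB (h haA).2
  omega
end
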